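/- There exists a constant c ∈ ℕ and a partial computable function H such that for every binary string x, every d ∈ ℕ with C(C(x)|x) > d + c, and every program p of length at most d, H(x, C(x), p) is defined and equals 1 if U halts on input p and equals 0 otherwise. In other words, the pair (x, C(x)) solves the halting problem for all programs of length at most d whenever C(C(x)|x) > d + c. -/

import Mathlib

/-- Conditional plain Kolmogorov complexity of `x` given `y`, with respect to the
machine `U` (which takes a pair (conditional input, program)). -/
noncomputable def condC (U : List Bool × List Bool →. List Bool) (x y : List Bool) : ℕ :=
  sInf {k : ℕ | ∃ p : List Bool, p.length = k ∧ x ∈ U (y, p)}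

/-- Plain (unconditional) Kolmogorov complexity with respect to `U`. -/
noncomputable def plainC (U : List Bool × List Bool →. List Bool) (x : List Bool) : ℕ :=
  condC U x []

/-- `U` is a partial computable, additively optimal (universal) machine. -/
def AdditivelyOptimal (U : List Bool × List Bool →. List Bool) : Prop :=
  Partrec U ∧
    ∀ V : List Bool × List Bool →. List Bool, Partrec V →
      ∃ c : ℕ, ∀ y p x, x ∈ V (y, p) →
        ∃ q : List Bool, x ∈ U (y, q) ∧ q.length ≤ p.length + c

/-- The string of `n` zeros; `C(n)` is the complexity of this string. -/
def zeros (n : ℕ) : List Bool := List.replicate n false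

/-- A natural number viewed as a binary string (for complexities like `C(C(x)|x)`). -/
def natStr (k : ℕ) : List Bool := k.bits

/-- The `i`-th binary digit of a real number. -/
noncomputable def binDigit (α : ℝ) (i : ℕ) : Bool :=
  decide (⌊α * 2 ^ (i + 1)⌋ % 2 = 1)

/-- The string of the first `n` binary digits of a real number. -/
noncomputable def binPrefix (α : ℝ) (n : ℕ) : List Bool :=
  (List.range n).map (binDigit α)

/-- `q` is a computable nondecreasing rational sequence converging to `α ∈ [0,1]`;
this witnesses that `α` is a left c.e. real. -/
structure LeftCEApprox (α : ℝ) (q : ℕ → ℚ) : Prop where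
  nonneg : 0 ≤ α
  le_one : α ≤ 1
  comp : Computable q
  mono : Monotone q
  tendsto : Filter.Tendsto (fun n => (q n : ℝ)) Filter.atTop (nhds α)

/-- Partial recursiveness relative to an oracle `g` (relativized `Nat.Partrec`). -/
inductive OracleRecursiveIn (g : ℕ →. ℕ) : (ℕ →. ℕ) → Prop
  | oracle : OracleRecursiveIn g g
  | zero : OracleRecursiveIn g (pure 0)
  | succ : OracleRecursiveIn g ↑Nat.succ
  | left : OracleRecursiveIn g ↑fun n : ℕ => (Nat.unpair n).1
  | right : OracleRecursiveIn g ↑fun n : ℕ => (Nat.unpair n).2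
  | pair {f h : ℕ →. ℕ} : OracleRecursiveIn g f → OracleRecursiveIn g h →
      OracleRecursiveIn g fun n => Nat.pair <$> f n <*> h n
  | comp {f h : ℕ →. ℕ} : OracleRecursiveIn g f → OracleRecursiveIn g h →
      OracleRecursiveIn g fun n => h n >>= f
  | prec {f h : ℕ →. ℕ} : OracleRecursiveIn g f → OracleRecursiveIn g h →
      OracleRecursiveIn g (Nat.unpaired fun a n =>
        n.rec (f a) fun y IH => do let i ← IH; h (Nat.pair a (Nat.pair y i)))
  | rfind {f : ℕ →. ℕ} : OracleRecursiveIn g f →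
      OracleRecursiveIn g fun a => Nat.rfind fun n => (fun m => m = 0) <$> f (Nat.pair a n)

/-- The binary digit sequence of a real, as an oracle. -/
noncomputable def digitOracle (α : ℝ) : ℕ →. ℕ :=
  fun n => Part.some (cond (binDigit α n) 1 0)

open Classical in
/-- The halting problem, as a (characteristic) function on codes of programs. -/
noncomputable def haltingFun : ℕ → ℕ := fun n =>
  if ((Denumerable.ofNat Nat.Partrec.Code n).eval n).Dom then 1 else 0

/-- The halting problem is Turing reducible to the binary digit sequence of `α`. -/
def TuringComplete (α : ℝ) : Prop :=
  OracleRecursiveIn (digitOracle α) ↑haltingFun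

/-!
Let `t` be the first stage at which some program of length at most `C(x)` is seen to print `x`;
from `x` and `C(x)` one can compute `t`, and `H(x, C(x), p)` reports whether `p` halts within `t`
steps. If some halting `p` has not halted by stage `t`, then running `p` until it halts and then
printing the least `k` for which a description of `x` of length at most `k` has been found by then
computes `C(x)` from `x` and `p`. Hence `C(C(x)|x) ≤ |p| + c`, so `C(C(x)|x) > d + c` forces every
halting program of length at most `d` to halt by stage `t`.
-/

open Encodable Nat.Partrec

/-- `g a s` is the value of `f a` if the computation has finished within `s` steps, and `none`
otherwise. -/
structure IsStaging {α σ : Type*} [Primcodable α] [Primcodable σ]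
    (f : α →. σ) (g : α → ℕ → Option σ) : Prop where
  primrec : Primrec₂ g
  mono : ∀ {a s s' b}, s ≤ s' → g a s = some b → g a s' = some b
  mem_iff : ∀ {a b}, b ∈ f a ↔ ∃ s, g a s = some b

theorem Partrec.exists_isStaging {α σ : Type*} [Primcodable α] [Primcodable σ] {f : α →. σ}
    (hf : Partrec f) : ∃ g, IsStaging f g := by
  obtain ⟨c, hc⟩ := Code.exists_code.1 hf
  have eval_encode (a : α) : c.eval (encode a) = (f a).map encode := by simp [hc, encodek]
  refine ⟨fun a s => (c.evaln s (encode a)).bind decode, ?_, ?_, fun {a b} => ⟨?_, ?_⟩⟩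
  · exact Primrec.option_bind (Code.primrec_evaln.comp
      ((Primrec.snd.pair (Primrec.const c)).pair (Primrec.encode.comp Primrec.fst)))
      (Primrec.decode.comp Primrec.snd).to₂
  · intro a s s' b hss' h
    obtain ⟨m, hm, hmb⟩ := Option.bind_eq_some_iff.1 h
    exact Option.bind_eq_some_iff.2 ⟨m, Code.evaln_mono hss' hm, hmb⟩
  · intro hb
    have hmem : encode b ∈ c.eval (encode a) := by rw [eval_encode]; exact Part.mem_map _ hb
    obtain ⟨s, hs⟩ := Code.evaln_complete.1 hmem
    exact ⟨s, by simp [Option.mem_def.1 hs, encodek]⟩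
  · rintro ⟨s, hs⟩
    obtain ⟨m, hm, hmb⟩ := Option.bind_eq_some_iff.1 hs
    have hmem := Code.evaln_sound hm
    rw [eval_encode] at hmem
    obtain ⟨b', hb', rfl⟩ := (Part.mem_map_iff _).1 hmem
    rw [encodek, Option.some_inj] at hmb
    exact hmb ▸ hb'

namespace IsStaging

variable {α σ : Type*} [Primcodable α] [Primcodable σ]
  {f : α →. σ} {g : α → ℕ → Option σ}

theorem dom_iff (hg : IsStaging f g) {a : α} : (f a).Dom ↔ ∃ s, (g a s).isSome := by
  simp only [Part.dom_iff_mem, hg.mem_iff, Option.isSome_iff_exists]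
  exact exists_comm

theorem isSome_mono (hg : IsStaging f g) {a : α} {s s' : ℕ} (hss' : s ≤ s')
    (h : (g a s).isSome) : (g a s').isSome := by
  obtain ⟨b, hb⟩ := Option.isSome_iff_exists.1 h
  simp [hg.mono hss' hb]

end IsStaging

namespace Primrec

theorem nat_bits : Primrec Nat.bits := by
  have hlen : Primrec fun q : Unit × List (List Bool) => q.2.length := list_length.comp snd
  have h := nat_strong_rec (fun (_ : Unit) n => n.bits)
    (g := fun _ l => some (if l.length = 0 then [] else l.length.bodd :: l.getD l.length.div2 []))
    (option_some.comp (ite (Primrec.eq.comp hlen (const 0)) (const [])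
      (list_cons.comp (nat_bodd.comp hlen) ((list_getD []).comp snd (nat_div2.comp hlen))))) ?_
  · exact h.comp (const ()) Primrec.id
  · rintro _ (_ | n)
    · simp
    · have hlt : (n + 1).div2 < n + 1 := by rw [Nat.div2_val]; omega
      have hne : (n + 1).bits ≠ [] :=
        List.ne_nil_of_length_pos (by rw [Nat.size_eq_bits_len, Nat.size_pos]; omega)
      obtain ⟨b, l, hbl⟩ := List.exists_cons_of_ne_nil hne
      simp only [List.length_map, List.length_range, Nat.add_one_ne_zero, if_false,
        List.getD_eq_getElem?_getD, List.getElem?_map, List.getElem?_range hlt, Option.map_some,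
        Option.getD_some, Nat.bodd_eq_bits_head, Nat.div2_bits_eq_tail, hbl]
      rfl

end Primrec

section Complexity

variable {U : List Bool × List Bool →. List Bool}

theorem condC_le {x y q : List Bool} (h : x ∈ U (y, q)) : condC U x y ≤ q.length :=
  Nat.sInf_le ⟨q, rfl, h⟩

theorem exists_length_eq_condC {x y : List Bool} (h : ∃ q, x ∈ U (y, q)) :
    ∃ q, q.length = condC U x y ∧ x ∈ U (y, q) :=
  Nat.sInf_mem (s := {k | ∃ q : List Bool, q.length = k ∧ x ∈ U (y, q)})
    (h.elim fun q hq => ⟨q.length, q, rfl, hq⟩)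

theorem AdditivelyOptimal.exists_mem (hU : AdditivelyOptimal U) (x y : List Bool) :
    ∃ q, x ∈ U (y, q) := by
  obtain ⟨c, hc⟩ := hU.2 (fun a => Part.some a.2) Computable.snd.partrec
  obtain ⟨q, hq, -⟩ := hc y x x (Part.mem_some x)
  exact ⟨q, hq⟩

end Complexity

section Stages

variable (g : List Bool × List Bool → ℕ → Option (List Bool))

/-- Only the programs with code below `s` are searched, so that the search is finite. -/
def DescribedWithin (x : List Bool) (k s : ℕ) : Prop :=
  ∃ p ∈ (List.range s).filterMap decode, p.length ≤ k ∧ g ([], p) s = some x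

instance (x : List Bool) (k s : ℕ) : Decidable (DescribedWithin g x k s) :=
  inferInstanceAs (Decidable (∃ p ∈ _, _))

def firstHalt (p : List Bool) : Part ℕ :=
  Nat.rfind fun s => Part.some (g ([], p) s).isSome

def firstDescription (x : List Bool) (k : ℕ) : Part ℕ :=
  Nat.rfind fun s => Part.some (decide (DescribedWithin g x k s))

def approxC (x : List Bool) (s : ℕ) : Part ℕ :=
  Nat.rfind fun k => Part.some (decide (DescribedWithin g x k s))

def haltingSolver (a : List Bool × ℕ × List Bool) : Part ℕ :=
  (firstDescription g a.1 a.2.1).map fun s => if (g ([], a.2.2) s).isSome then 1 else 0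

def complexityAtHalt (a : List Bool × List Bool) : Part (List Bool) :=
  (firstHalt g a.2).bind fun s => (approxC g a.1 s).map natStr

variable {g} {U : List Bool × List Bool →. List Bool}

theorem primrecPred_describedWithin (hg : Primrec₂ g) :
    PrimrecPred fun a : List Bool × ℕ × ℕ => DescribedWithin g a.1 a.2.1 a.2.2 := by
  have hR : PrimrecRel fun (p : List Bool) (a : List Bool × ℕ × ℕ) =>
      p.length ≤ a.2.1 ∧ g ([], p) a.2.2 = some a.1 :=
    (Primrec.nat_le.comp (Primrec.list_length.comp Primrec.fst)
        (Primrec.fst.comp (Primrec.snd.comp Primrec.snd))).and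
      (Primrec.eq.comp
        (hg.comp ((Primrec.const []).pair Primrec.fst)
          (Primrec.snd.comp (Primrec.snd.comp Primrec.snd)))
        (Primrec.option_some.comp (Primrec.fst.comp Primrec.snd)))
  exact hR.exists_mem_list.comp
    (Primrec.listFilterMap (Primrec.list_range.comp (Primrec.snd.comp Primrec.snd))
      (Primrec.decode.comp Primrec.snd).to₂) Primrec.id

theorem partrec_haltingSolver (hg : Primrec₂ g) : Partrec (haltingSolver g) := by
  refine Partrec.map (Partrec.rfind ?_) ?_
  · exact ((primrecPred_describedWithin hg).decide.comp
      ((Primrec.fst.comp Primrec.fst).pair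
        ((Primrec.fst.comp (Primrec.snd.comp Primrec.fst)).pair Primrec.snd))).to₂
      |>.to_comp.partrec₂
  · exact (Primrec.ite (Primrec.eq.comp (Primrec.option_isSome.comp (hg.comp
      ((Primrec.const []).pair (Primrec.snd.comp (Primrec.snd.comp Primrec.fst))) Primrec.snd))
      (Primrec.const true)) (Primrec.const 1) (Primrec.const 0)).to_comp

theorem partrec_complexityAtHalt (hg : Primrec₂ g) : Partrec (complexityAtHalt g) := by
  refine Partrec.bind (Partrec.rfind ?_) (Partrec.map (Partrec.rfind ?_) ?_)
  · exact (Primrec.option_isSome.comp (hg.comp ((Primrec.const []).pair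
      (Primrec.snd.comp Primrec.fst)) Primrec.snd)).to₂.to_comp.partrec₂
  · exact ((primrecPred_describedWithin hg).decide.comp
      ((Primrec.fst.comp (Primrec.fst.comp Primrec.fst)).pair
        (Primrec.snd.pair (Primrec.snd.comp Primrec.fst)))).to₂.to_comp.partrec₂
  · exact (Primrec.nat_bits.comp Primrec.snd).to_comp

theorem DescribedWithin.mono (hg : IsStaging U g) {x : List Bool} {k s s' : ℕ} (hss' : s ≤ s')
    (h : DescribedWithin g x k s) : DescribedWithin g x k s' := by
  obtain ⟨p, hp, hlen, hx⟩ := h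
  obtain ⟨n, hn, hdec⟩ := List.mem_filterMap.1 hp
  exact ⟨p, List.mem_filterMap.2 ⟨n, by simp at hn ⊢; omega, hdec⟩, hlen, hg.mono hss' hx⟩

theorem DescribedWithin.exists_mem (hg : IsStaging U g) {x : List Bool} {k s : ℕ}
    (h : DescribedWithin g x k s) : ∃ p, p.length ≤ k ∧ x ∈ U ([], p) := by
  obtain ⟨p, -, hlen, hx⟩ := h
  exact ⟨p, hlen, hg.mem_iff.2 ⟨s, hx⟩⟩

theorem exists_describedWithin (hg : IsStaging U g) {x p : List Bool} {k : ℕ}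
    (hx : x ∈ U ([], p)) (hlen : p.length ≤ k) : ∃ s, DescribedWithin g x k s := by
  obtain ⟨s, hs⟩ := hg.mem_iff.1 hx
  refine ⟨max s (encode p + 1), p, ?_, hlen, hg.mono (le_max_left _ _) hs⟩
  simp only [List.mem_filterMap, List.mem_range]
  exact ⟨encode p, by omega, encodek p⟩

theorem firstDescription_plainC_dom (hU : AdditivelyOptimal U) (hg : IsStaging U g)
    (x : List Bool) : (firstDescription g x (plainC U x)).Dom := by
  obtain ⟨q, hlen, hq⟩ := exists_length_eq_condC (hU.exists_mem x [])
  obtain ⟨s, hs⟩ := exists_describedWithin (k := plainC U x) hg hq hlen.le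
  exact Nat.rfind_dom.2 ⟨s, by simpa using hs, fun _ => trivial⟩

theorem plainC_mem_approxC (hg : IsStaging U g) {x : List Bool} {s : ℕ}
    (h : DescribedWithin g x (plainC U x) s) : plainC U x ∈ approxC g x s := by
  obtain ⟨k, hk⟩ := Part.dom_iff_mem.1
    (Nat.rfind_dom.2 ⟨plainC U x, by simpa using h, fun _ => trivial⟩ : (approxC g x s).Dom)
  have hk_le : k ≤ plainC U x := by
    by_contra! hlt
    simpa [h] using Nat.rfind_min hk hlt
  have hle_k : plainC U x ≤ k := by
    obtain ⟨p, hlen, hx⟩ := DescribedWithin.exists_mem hg (by simpa using Nat.rfind_spec hk)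
    exact (condC_le hx).trans hlen
  exact le_antisymm hk_le hle_k ▸ hk

theorem natStr_plainC_mem_complexityAtHalt (hg : IsStaging U g) {x p : List Bool} {t : ℕ}
    (ht : t ∈ firstDescription g x (plainC U x)) (hp : (U ([], p)).Dom)
    (hpt : ¬(g ([], p) t).isSome) : natStr (plainC U x) ∈ complexityAtHalt g (x, p) := by
  have hdom : (firstHalt g p).Dom :=
    Nat.rfind_dom.2 (hg.dom_iff.1 hp |>.imp fun s hs => ⟨by simpa using hs, fun _ => trivial⟩)
  obtain ⟨s, hs⟩ := Part.dom_iff_mem.1 hdom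
  have hps : (g ([], p) s).isSome := by simpa using Nat.rfind_spec hs
  have hts : t ≤ s := by
    by_contra! hst
    exact hpt (hg.isSome_mono hst.le hps)
  have hdesc : DescribedWithin g x (plainC U x) s :=
    DescribedWithin.mono hg hts (by simpa using Nat.rfind_spec ht)
  exact Part.mem_bind hs (Part.mem_map _ (plainC_mem_approxC hg hdesc))

end Stages

open Classical in
/-- There is a constant `c` and a partial computable `H` such that whenever
`C(C(x)|x) > d + c`, the pair `(x, C(x))` solves the halting problem for all programs of
length at most `d`: `H(x, C(x), p)` is defined, and equals `1` if `U` halts on `p` and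
`0` otherwise. -/
theorem pair_with_complexity_solves_halting
    (U : List Bool × List Bool →. List Bool) (hU : AdditivelyOptimal U) :
    ∃ (c : ℕ) (H : List Bool × ℕ × List Bool →. ℕ), Partrec H ∧
      ∀ (x : List Bool) (d : ℕ) (p : List Bool),
        d + c < condC U (natStr (plainC U x)) x → p.length ≤ d →
          (if (U (([] : List Bool), p)).Dom then 1 else 0) ∈ H (x, plainC U x, p) := by
  obtain ⟨g, hg⟩ := hU.1.exists_isStaging
  obtain ⟨c, hc⟩ := hU.2 _ (partrec_complexityAtHalt hg.primrec)
  refine ⟨c, haltingSolver g, partrec_haltingSolver hg.primrec, fun x d p hd hp => ?_⟩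
  obtain ⟨t, ht⟩ := Part.dom_iff_mem.1 (firstDescription_plainC_dom hU hg x)
  have halts_iff : (U ([], p)).Dom ↔ (g ([], p) t).isSome := by
    refine ⟨fun hdom => ?_, fun h => hg.dom_iff.2 ⟨t, h⟩⟩
    by_contra hpt
    obtain ⟨q, hq, hlen⟩ := hc x p _ (natStr_plainC_mem_complexityAtHalt hg ht hdom hpt)
    have hC := condC_le hq
    omega
  have hH : (if (g ([], p) t).isSome then 1 else 0) ∈ haltingSolver g (x, plainC U x, p) :=
    Part.mem_map _ ht
  simpa only [halts_iff] using hH
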